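/- arXiv:1811.08528 — 2 statements merged into one kernel-verified Lean document; each statement's English description precedes it below -/
import Mathlib

section
/- Suppose the $\sigma^{\downarrow}$-siblings $\{\sigma^{\downarrow}(2k-1),\sigma^{\downarrow}(2k)\}$ have the form $\{\epsilon p(i),\bar\epsilon p(j)\}$ for some $i,j\in[N]$. Then $i\le j$ and $i+j$ is even (i.e., $i$ and $j$ have the same parity). -/
open scoped Classical

noncomputable section

/-- The posterior term: `(k, false) ↦ ε·p(k)` and `(k, true) ↦ (1-ε)·p(k)`. -/
def pt (N : ℕ) (p : Fin N → ℝ) (ε : ℝ) : Fin N × Bool → ℝ :=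
  fun x => (if x.2 then 1 - ε else ε) * p x.1

/-- The set `Π` of all `2N` posterior terms. -/
def PiAll (N : ℕ) (p : Fin N → ℝ) (ε : ℝ) : Set ℝ := Set.range (pt N p ε)

/-- The posterior set `Π_A^1 = {(1-ε)p(k) : k ∈ A} ∪ {ε p(k) : k ∉ A}`. -/
def Pi1 (N : ℕ) (p : Fin N → ℝ) (ε : ℝ) (A : Finset (Fin N)) : Set ℝ :=
  {x | ∃ k : Fin N, (k ∈ A ∧ x = pt N p ε (k, true)) ∨ (k ∉ A ∧ x = pt N p ε (k, false))}

/-- The posterior set `Π_A^0 = Π \ Π_A^1`. -/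
def Pi0 (N : ℕ) (p : Fin N → ℝ) (ε : ℝ) (A : Finset (Fin N)) : Set ℝ :=
  PiAll N p ε \ Pi1 N p ε A

/-- The posterior set `Π_A^y`. -/
def PiY (N : ℕ) (p : Fin N → ℝ) (ε : ℝ) (A : Finset (Fin N)) (y : Bool) : Set ℝ :=
  if y then Pi1 N p ε A else Pi0 N p ε A

/-- Index `2k-1` (1-based), i.e. `2k` (0-based), of the `k`-th σ-sibling pair. -/
def i0 {N : ℕ} (k : Fin N) : Fin (2 * N) := ⟨2 * k.1, by have := k.isLt; omega⟩

/-- Index `2k` (1-based), i.e. `2k+1` (0-based), of the `k`-th σ-sibling pair. -/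
def i1 {N : ℕ} (k : Fin N) : Fin (2 * N) := ⟨2 * k.1 + 1, by have := k.isLt; omega⟩

/-- `A` and the bijection `σ : [2N] → Π` are posterior-respecting: no σ-sibling pair
`{σ(2k-1), σ(2k)}` is contained in a single posterior set `Π_A^y`. -/
def PR (N : ℕ) (p : Fin N → ℝ) (ε : ℝ) (σ : Fin (2 * N) → ℝ) (A : Finset (Fin N)) : Prop :=
  ∀ (k : Fin N) (y : Bool), ¬(({σ (i0 k), σ (i1 k)} : Set ℝ) ⊆ PiY N p ε A y)

/-- The graph `𝒢_σ` on the posterior terms (identified with their indices in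
`Fin N × Bool` via the injection `pt`), with posterior-sibling edges (same `k`)
and σ-sibling edges (`{σ(2k-1), σ(2k)}`). -/
def Gsig (N : ℕ) (p : Fin N → ℝ) (ε : ℝ) (σ : Fin (2 * N) → ℝ) :
    SimpleGraph (Fin N × Bool) :=
  SimpleGraph.fromRel (fun u v => u.1 = v.1 ∨ ∃ k : Fin N,
    ({pt N p ε u, pt N p ε v} : Set ℝ) = {σ (i0 k), σ (i1 k)})

/-- The zigzag partition: indices that are odd in the 1-based ordering
(`k.1` even in the 0-based ordering). -/
def AZZ (N : ℕ) : Finset (Fin N) := Finset.univ.filter (fun k => k.1 % 2 = 0)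

/-! The top `2k + 2` posterior terms are those `≥ σ↓(2k + 1)` (0-based), and since `σ↓` lists
*all* terms, its pair `{σ↓(2k), σ↓(2k + 1)}` is exactly the set of terms in the closed window
`[σ↓(2k + 1), σ↓(2k)]`. So among the top `2k + 2` terms the `ε`-terms are `ε p(0), …, ε p(i)`
and the `ε̄`-terms are `ε̄ p(0), …, ε̄ p(j)`, whence `(i + 1) + (j + 1) = 2k + 2`. Finally
`ε̄ p(i) > ε p(i)` is among the top terms as well, so `i ≤ j`. -/

open Finset

theorem StrictAnti.mem_pair_iff_mem_Icc {α : Type*} [LinearOrder α] {N : ℕ}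
    {σ : Fin (2 * N) → α} (hσ : StrictAnti σ) (k : Fin N) {x : α} (hx : x ∈ Set.range σ) :
    x ∈ ({σ (i0 k), σ (i1 k)} : Set α) ↔ x ∈ Set.Icc (σ (i1 k)) (σ (i0 k)) := by
  obtain ⟨t, rfl⟩ := hx
  simp only [Set.mem_insert_iff, Set.mem_singleton_iff, Set.mem_Icc, hσ.le_iff_ge,
    hσ.injective.eq_iff, Fin.le_def, Fin.ext_iff, i0, i1]
  omega

theorem card_filter_le_apply_of_range_eq {ι α : Type*} [Fintype ι] [LinearOrder α] {n : ℕ}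
    {f : ι → α} (hf : Function.Injective f) {σ : Fin n → α} (hσ : StrictAnti σ)
    (hrange : Set.range σ = Set.range f) (s : Fin n) :
    #{u | σ s ≤ f u} = s + 1 := by
  have himage : ({u | σ s ≤ f u} : Finset ι).image f = (Iic s).image σ := by
    ext x
    simp only [mem_image, mem_filter, mem_univ, true_and, mem_Iic]
    constructor
    · rintro ⟨u, hu, rfl⟩
      obtain ⟨t, ht⟩ : f u ∈ Set.range σ := hrange ▸ Set.mem_range_self u
      exact ⟨t, hσ.le_iff_ge.1 (ht ▸ hu), ht⟩
    · rintro ⟨t, ht, rfl⟩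
      obtain ⟨u, hu⟩ : σ t ∈ Set.range f := hrange ▸ Set.mem_range_self t
      exact ⟨u, hu ▸ hσ.antitone ht, hu⟩
  rw [← card_image_of_injective _ hf, himage, card_image_of_injective _ hσ.injective,
    Fin.card_Iic]

theorem StrictAnti.filter_le_apply_eq_Iic {α : Type*} [LinearOrder α] {n : ℕ}
    {g : Fin n → α} (hg : StrictAnti g) {a : α} {i : Fin n} (hi : a ≤ g i)
    (hnext : ∀ m, a ≤ g m → g m ≤ g i → m = i) :
    ({m | a ≤ g m} : Finset (Fin n)) = Iic i := by
  ext m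
  simp only [mem_filter, mem_univ, true_and, mem_Iic]
  refine ⟨fun hm => ?_, fun hm => hi.trans (hg.antitone hm)⟩
  by_contra! him
  exact him.ne' (hnext m hm (hg him).le)

theorem card_filter_prod_bool {α : Type*} [Fintype α] (Q : α × Bool → Prop) [DecidablePred Q] :
    #{u | Q u} = #{m | Q (m, false)} + #{m | Q (m, true)} := by
  simp only [card_filter, Fintype.sum_prod_type, Fintype.sum_bool, ← sum_add_distrib, add_comm]

theorem pt_strictAnti {N : ℕ} {p : Fin N → ℝ} (hp : StrictAnti p) {ε : ℝ} (hε0 : 0 < ε)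
    (hε1 : ε < 1) (b : Bool) : StrictAnti fun m => pt N p ε (m, b) := by
  have hc : 0 < if b then 1 - ε else ε := by split <;> linarith
  exact fun m m' h => mul_lt_mul_of_pos_left (hp h) hc

theorem stmt8_general (N : ℕ) (p : Fin N → ℝ) (hp : ∀ k, 0 < p k)
    (hpanti : StrictAnti p)
    (ε : ℝ) (hε0 : 0 < ε) (hε : ε < 1 / 2)
    (hinj : Function.Injective (pt N p ε))
    (σd : Fin (2 * N) → ℝ) (hσd : StrictAnti σd) (hσr : Set.range σd = PiAll N p ε)
    (k i j : Fin N)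
    (hpair : ({σd (i0 k), σd (i1 k)} : Set ℝ) =
      {pt N p ε (i, false), pt N p ε (j, true)}) :
    i ≤ j ∧ Even (i.1 + j.1) := by
  set lo := σd (i1 k)
  have hwindow : ∀ b m, pt N p ε (m, b) ∈ Set.Icc lo (σd (i0 k)) ↔ m = bif b then j else i := by
    intro b m
    rw [← hσd.mem_pair_iff_mem_Icc k (hσr ▸ Set.mem_range_self _), hpair]
    cases b <;> simp [hinj.eq_iff]
  have hIic : ∀ b, ({m | lo ≤ pt N p ε (m, b)} : Finset (Fin N)) = Iic (bif b then j else i) :=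
    fun b =>
      have hmem := (hwindow b _).2 rfl
      (pt_strictAnti hpanti hε0 (by linarith) b).filter_le_apply_eq_Iic hmem.1
        fun m h1 h2 => (hwindow b m).1 ⟨h1, h2.trans hmem.2⟩
  have hcount : #{u | lo ≤ pt N p ε u} = (i1 k).1 + 1 :=
    card_filter_le_apply_of_range_eq hinj hσd hσr (i1 k)
  simp only [card_filter_prod_bool, hIic, cond_false, cond_true, Fin.card_Iic] at hcount
  have hij : i ∈ ({m | lo ≤ pt N p ε (m, true)} : Finset (Fin N)) := by
    have hlo : lo ≤ pt N p ε (i, false) := ((hwindow false i).2 rfl).1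
    have hlt : pt N p ε (i, false) < pt N p ε (i, true) := by
      simp only [pt, Bool.false_eq_true, ↓reduceIte]
      gcongr
      · exact hp i
      · linarith
    simpa using hlo.trans hlt.le
  rw [hIic, cond_true, mem_Iic] at hij
  exact ⟨hij, k, by simp only [i1] at hcount; omega⟩

/-- **(Statement 8.)** If a σ↓-sibling pair has the form `{ε p(i), (1-ε) p(j)}`,
then `i ≤ j` and `i + j` is even (`i` and `j` have the same parity). -/
theorem stmt8 (N : ℕ) (hN : 1 ≤ N) (p : Fin N → ℝ) (hp : ∀ k, 0 < p k)
    (hsum : ∑ k, p k = 1) (hpanti : StrictAnti p)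
    (ε : ℝ) (hε0 : 0 < ε) (hε : ε < 1 / 2)
    (hinj : Function.Injective (pt N p ε))
    (σd : Fin (2 * N) → ℝ) (hσd : StrictAnti σd) (hσr : Set.range σd = PiAll N p ε)
    (k i j : Fin N)
    (hpair : ({σd (i0 k), σd (i1 k)} : Set ℝ) =
      {pt N p ε (i, false), pt N p ε (j, true)}) :
    i ≤ j ∧ Even (i.1 + j.1) :=
  stmt8_general N p hp hpanti ε hε0 hε hinj σd hσd hσr k i j hpair

end
end

section
/- For any bijection $\sigma:[2N]\to\Pi$ induced by some partition $A\subseteq[N]$ and any nondecreasing $f:[N]\to\mathbb{R}$, we have $\sum_{k\in[N]}f(k)[\sigma(2k-1)+\sigma(2k)]\ge\sum_{k\in[N]}f(k)[\sigma^{\downarrow}(2k-1)+\sigma^{\downarrow}(2k)]$, where $\sigma^{\downarrow}$ is the descending ordering of $\Pi$. Consequently $\min_{A\subseteq[N]}G^f_A(X)$ is bounded below by the unconstrained minimum $\sum_k f(k)[\sigma^{\downarrow}(2k-1)+\sigma^{\downarrow}(2k)]$. -/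
open scoped Classical

noncomputable section

/-- The list of elements of a real multiset sorted in descending order. -/
def sortDesc (m : Multiset ℝ) : List ℝ := (m.sort (· ≤ ·)).reverse

/-- The multiset of posterior terms corresponding to Carole's answer `y` for the
partition `A`: for `y = 1` it consists of `(1-ε)p(k)` for `k ∈ A` and `ε p(k)` for
`k ∉ A`, and complementarily for `y = 0`. -/
def postMul (N : ℕ) (p : Fin N → ℝ) (ε : ℝ) (A : Finset (Fin N)) (y : Bool) :
    Multiset ℝ :=
  Finset.univ.val.map (fun k : Fin N => (if ((k ∈ A) ↔ y = true) then 1 - ε else ε) * p k)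

/-- `G^f_A(X) = ∑_k f(k)·(π_A^0(k) + π_A^1(k))`, where `π_A^y` lists the posterior
multiset `Π_A^y` in descending order. -/
def Gf (N : ℕ) (p : Fin N → ℝ) (ε : ℝ) (f : Fin N → ℝ) (A : Finset (Fin N)) : ℝ :=
  ∑ k : Fin N, f k * ((sortDesc (postMul N p ε A false)).getD k.1 0 +
    (sortDesc (postMul N p ε A true)).getD k.1 0)

open Finset

/-!
Cut `Fin (2 * N)` into the σ-sibling pairs `(2k, 2k+1)` and index it by `Fin N × Bool`. Both sides
of the inequality are then `∑ f(x.1) · s(x)` for a bijection `s` onto `Π`: on the left the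
descending enumeration `σ↓`, on the right either `σ` or, for `G^f_B`, the bijection placing the
sorted posterior lists `π_B^0, π_B^1` side by side (their union is `Π` as a multiset). The weight
`x ↦ f(x.1)` is monotone along the pair order, against which `σ↓` is decreasing, so the two
antivary and the rearrangement inequality makes `σ↓` the minimiser among all such bijections.
-/

theorem Finset.map_val_eq_sum_singleton {ι β : Type*} (s : Finset ι) (f : ι → β) :
    s.val.map f = ∑ a ∈ s, {f a} := by
  rw [← Multiset.sum_map_singleton (s.val.map f), Multiset.map_map]; rfl

theorem Finset.univ_val_map_prod_bool {α β : Type*} [Fintype α] (u : α × Bool → β) :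
    univ.val.map u =
      univ.val.map (fun a => u (a, false)) + univ.val.map (fun a => u (a, true)) := by
  simp only [map_val_eq_sum_singleton, Fintype.sum_prod_type, Fintype.sum_bool, sum_add_distrib]
  exact add_comm _ _

theorem injective_and_range_eq_of_map_univ_val_eq {ι β : Type*} [Fintype ι] {u v : ι → β}
    (hv : Function.Injective v) (h : univ.val.map u = univ.val.map v) :
    Function.Injective u ∧ Set.range u = Set.range v := by
  refine ⟨fun x y hxy => ?_, ?_⟩
  · have hnd := (Multiset.nodup_map_iff_inj_on univ.nodup).1 (h ▸ univ.nodup.map hv)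
    exact hnd x (mem_univ x) y (mem_univ y) hxy
  · ext b
    simpa [eq_comm] using congrArg (b ∈ ·) h

theorem Antivary.sum_mul_le_sum_mul_of_range_eq {ι α : Type*} [Fintype ι] [CommSemiring α]
    [LinearOrder α] [IsStrictOrderedRing α] [ExistsAddOfLE α] {w b s : ι → α}
    (hwb : Antivary w b) (hb : Function.Injective b) (hs : Function.Injective s)
    (hr : Set.range s = Set.range b) :
    ∑ i, w i * b i ≤ ∑ i, w i * s i := by
  let τ : Equiv.Perm ι :=
    (Equiv.ofInjective s hs).trans ((Equiv.setCongr hr).trans (Equiv.ofInjective b hb).symm)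
  have hbτ : ∀ i, b (τ i) = s i := fun i =>
    Equiv.apply_ofInjective_symm hb ⟨s i, hr ▸ Set.mem_range_self i⟩
  simpa only [hbτ] using hwb.sum_mul_le_sum_mul_comp_perm (σ := τ)

def pairIdx (N : ℕ) : Fin N × Bool ≃ Fin (2 * N) where
  toFun x := ⟨2 * x.1 + x.2.toNat, by have := x.1.isLt; have := x.2.toNat_le; omega⟩
  invFun j := (⟨j / 2, by omega⟩, decide (j.1 % 2 = 1))
  left_inv := by
    rintro ⟨k, _ | _⟩ <;> simp [Fin.ext_iff]
    omega
  right_inv := by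
    intro j
    rcases Nat.mod_two_eq_zero_or_one j.1 with h | h <;> simp [h, Fin.ext_iff] <;> omega

@[simp] lemma pairIdx_false {N : ℕ} (k : Fin N) : pairIdx N (k, false) = i0 k := rfl

@[simp] lemma pairIdx_true {N : ℕ} (k : Fin N) : pairIdx N (k, true) = i1 k := rfl

lemma antivary_fst_pairIdx {N : ℕ} {α β : Type*} [Preorder α] [Preorder β] {f : Fin N → α}
    (hf : Monotone f) {b : Fin (2 * N) → β} (hb : Antitone b) :
    Antivary (fun x : Fin N × Bool => f x.1) (b ∘ pairIdx N) := by
  intro x y hxy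
  have hlt : (pairIdx N y).1 < (pairIdx N x).1 := by
    by_contra! h
    exact hxy.not_ge (hb (Fin.le_iff_val_le_val.2 h))
  have := x.2.toNat_le
  exact hf (Fin.le_iff_val_le_val.2 (by simp [pairIdx] at hlt; omega))

theorem sum_pairs_le_of_range_eq {N : ℕ} {α : Type*} [CommSemiring α] [LinearOrder α]
    [IsStrictOrderedRing α] [ExistsAddOfLE α] {f : Fin N → α} (hf : Monotone f)
    {b : Fin (2 * N) → α} (hb : StrictAnti b) {u : Fin N × Bool → α}
    (hu : Function.Injective u) (hr : Set.range u = Set.range b) :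
    ∑ k, f k * (b (i0 k) + b (i1 k)) ≤ ∑ k, f k * (u (k, false) + u (k, true)) := by
  have key := (antivary_fst_pairIdx hf hb.antitone).sum_mul_le_sum_mul_of_range_eq
    (hb.injective.comp (pairIdx N).injective) hu (by rw [hr, EquivLike.range_comp])
  simpa only [Fintype.sum_prod_type, Fintype.sum_bool, Function.comp_apply, pairIdx_false,
    pairIdx_true, mul_add, add_comm] using key

lemma postMul_false_add_postMul_true (N : ℕ) (p : Fin N → ℝ) (ε : ℝ) (A : Finset (Fin N)) :
    postMul N p ε A false + postMul N p ε A true = univ.val.map (pt N p ε) := by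
  simp only [postMul, map_val_eq_sum_singleton, ← sum_add_distrib, Fintype.sum_prod_type,
    Fintype.sum_bool]
  refine sum_congr rfl fun k _ => ?_
  by_cases hk : k ∈ A <;> simp [pt, hk, add_comm]

lemma map_getD_sortDesc {N : ℕ} (m : Multiset ℝ) (hm : m.card = N) :
    univ.val.map (fun k : Fin N => (sortDesc m).getD k 0) = m := by
  have hlen : (sortDesc m).length = N := by simp [sortDesc, hm]
  have : List.ofFn (fun k : Fin N => (sortDesc m).getD k 0) = sortDesc m := by
    subst hlen; apply List.ext_getElem <;> simp
  rw [Fin.univ_val_map, this, sortDesc, Multiset.coe_reverse, Multiset.sort_eq]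

lemma univ_val_map_sortDesc_postMul (N : ℕ) (p : Fin N → ℝ) (ε : ℝ) (A : Finset (Fin N)) :
    univ.val.map (fun x : Fin N × Bool => (sortDesc (postMul N p ε A x.2)).getD x.1 0) =
      univ.val.map (pt N p ε) := by
  rw [univ_val_map_prod_bool]
  dsimp only
  rw [map_getD_sortDesc, map_getD_sortDesc, postMul_false_add_postMul_true] <;> simp [postMul]

theorem stmt12_general (N : ℕ) (p : Fin N → ℝ)
    (ε : ℝ)
    (hinj : Function.Injective (pt N p ε))
    (σd : Fin (2 * N) → ℝ) (hσd : StrictAnti σd) (hσr : Set.range σd = PiAll N p ε)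
    (f : Fin N → ℝ) (hf : Monotone f)
    (σ : Fin (2 * N) → ℝ) (hσinj : Function.Injective σ)
    (hσrange : Set.range σ = PiAll N p ε) :
    (∑ k : Fin N, f k * (σd (i0 k) + σd (i1 k))) ≤
        ∑ k : Fin N, f k * (σ (i0 k) + σ (i1 k)) ∧
      ∀ B : Finset (Fin N),
        (∑ k : Fin N, f k * (σd (i0 k) + σd (i1 k))) ≤ Gf N p ε f B := by
  refine ⟨?_, fun B => ?_⟩
  · simpa only [Function.comp_apply, pairIdx_false, pairIdx_true] using
      sum_pairs_le_of_range_eq hf hσd (hσinj.comp (pairIdx N).injective)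
        (by rw [EquivLike.range_comp, hσrange, hσr])
  · obtain ⟨hu, hu_range⟩ :=
      injective_and_range_eq_of_map_univ_val_eq hinj (univ_val_map_sortDesc_postMul N p ε B)
    exact sum_pairs_le_of_range_eq hf hσd hu (hu_range.trans hσr.symm)

/-- **(Statement 12.)** For any bijection `σ : [2N] → Π` induced by a partition `A`
(i.e. `{σ(2k-1), σ(2k)} = {π_A^0(k), π_A^1(k)}` for all `k`) and any nondecreasing
`f`, the sum `∑ f(k)(σ(2k-1)+σ(2k))` is bounded below by the unconstrained minimum
`∑ f(k)(σ↓(2k-1)+σ↓(2k))`; consequently `G^f_B(X)` is bounded below by the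
unconstrained minimum for every partition `B`. -/
theorem stmt12 (N : ℕ) (hN : 1 ≤ N) (p : Fin N → ℝ) (hp : ∀ k, 0 < p k)
    (hsum : ∑ k, p k = 1)
    (ε : ℝ) (hε0 : 0 < ε) (hε : ε < 1 / 2)
    (hinj : Function.Injective (pt N p ε))
    (σd : Fin (2 * N) → ℝ) (hσd : StrictAnti σd) (hσr : Set.range σd = PiAll N p ε)
    (f : Fin N → ℝ) (hf : Monotone f)
    (A : Finset (Fin N)) (σ : Fin (2 * N) → ℝ) (hσinj : Function.Injective σ)
    (hσrange : Set.range σ = PiAll N p ε)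
    (hind : ∀ k : Fin N, ({σ (i0 k), σ (i1 k)} : Set ℝ) =
      {(sortDesc (postMul N p ε A false)).getD k.1 0,
       (sortDesc (postMul N p ε A true)).getD k.1 0}) :
    (∑ k : Fin N, f k * (σd (i0 k) + σd (i1 k))) ≤
        ∑ k : Fin N, f k * (σ (i0 k) + σ (i1 k)) ∧
      ∀ B : Finset (Fin N),
        (∑ k : Fin N, f k * (σd (i0 k) + σd (i1 k))) ≤ Gf N p ε f B :=
  stmt12_general N p ε hinj σd hσd hσr f hf σ hσinj hσrange

end
end
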